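/- arXiv:1709.05709 — 2 statements merged into one kernel-verified Lean document; each statement's English description precedes it below -/
import Mathlib

section
/- In a multitree with k roots, every vertex has in-degree at most k. -/
open Classical

/-- Reachability: reflexive-transitive closure of the edge relation. -/
def Reach {V : Type*} (E : V → V → Prop) : V → V → Prop :=
  Relation.ReflTransGen E

/-- A directed graph is acyclic if no vertex lies on a nontrivial cycle. -/
def Acyclic {V : Type*} (E : V → V → Prop) : Prop :=
  ∀ v : V, ¬ Relation.TransGen E v v

/-- The in-degree of a vertex `v`. -/
noncomputable def inDegree {V : Type*} [Fintype V] (E : V → V → Prop) (v : V) : ℕ :=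
  (Finset.univ.filter (fun u => E u v)).card

/-- The set of vertices reachable from each vertex induces an arborescence:
every vertex `v` reachable from `r` and distinct from `r` has exactly one parent
among the vertices reachable from `r`. -/
def ReachableSetsAreArborescences {V : Type*} (E : V → V → Prop) : Prop :=
  ∀ r v : V, Reach E r v → v ≠ r → ∃! u : V, Reach E r u ∧ E u v

/-- A root is a vertex of in-degree zero. -/
def IsRoot {V : Type*} (E : V → V → Prop) (r : V) : Prop :=
  ∀ u : V, ¬ E u r

/-!
Send each in-neighbour `u` of `v` to a root `r` from which it is reachable; one exists since a
finite acyclic graph has no infinite backward path. Two in-neighbours with the same root `r`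
are both parents of `v` inside the set reachable from `r`, which contains `v` and not the root
`r` itself, so they coincide by uniqueness of parents in an arborescence.
-/

section

variable {V : Type*} {E : V → V → Prop}

theorem Acyclic.wellFounded [Finite V] (hacyc : Acyclic E) : WellFounded E :=
  have : Std.Irrefl (Relation.TransGen E) := ⟨hacyc⟩
  Subrelation.wf Relation.TransGen.single (Finite.wellFounded_of_trans_of_irrefl _)

theorem exists_isRoot_reach (hwf : WellFounded E) (v : V) : ∃ r, IsRoot E r ∧ Reach E r v := by
  induction v using hwf.induction with
  | _ v ih =>
    by_cases hv : IsRoot E v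
    · exact ⟨v, hv, Relation.ReflTransGen.refl⟩
    · obtain ⟨u, huv⟩ := _root_.not_forall_not.mp hv
      obtain ⟨r, hr, hru⟩ := ih u huv
      exact ⟨r, hr, hru.tail huv⟩

theorem ReachableSetsAreArborescences.eq_of_reach_of_isRoot
    (harb : ReachableSetsAreArborescences E) {r u₁ u₂ v : V} (hr : IsRoot E r)
    (hru₁ : Reach E r u₁) (hru₂ : Reach E r u₂) (hu₁ : E u₁ v) (hu₂ : E u₂ v) : u₁ = u₂ :=
  have hvr : v ≠ r := by
    rintro rfl
    exact hr u₁ hu₁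
  (harb r v (hru₁.tail hu₁) hvr).unique ⟨hru₁, hu₁⟩ ⟨hru₂, hu₂⟩

end

/-- In a multitree with `k` roots, every vertex has in-degree at most `k`. -/
theorem multitree_inDegree_le_roots {V : Type*} [Fintype V] (E : V → V → Prop) (k : ℕ)
    (hacyc : Acyclic E) (harb : ReachableSetsAreArborescences E)
    (hroots : (Finset.univ.filter (fun r => IsRoot E r)).card = k) :
    ∀ v : V, inDegree E v ≤ k := by
  intro v
  choose root hroot hreach using exists_isRoot_reach hacyc.wellFounded
  rw [← hroots, inDegree]
  refine Finset.card_le_card_of_injOn root (fun u _ => by simpa using hroot u) ?_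
  intro u₁ hu₁ u₂ hu₂ hroot_eq
  exact harb.eq_of_reach_of_isRoot (hroot u₁) (hreach u₁) (hroot_eq ▸ hreach u₂)
    (Finset.mem_filter.mp hu₁).2 (Finset.mem_filter.mp hu₂).2
end

section
/- Let G = (V,E) be a finite cubic graph with a proper 3-edge-coloring and H the associated 3-root digraph as above. For a positive integer k, there exists a placement P ⊆ V with |P| = k such that at most 3 vertices of H have failure number equal to k and no vertex of H has failure number strictly between 1 and k (assuming k ≥ 2) if and only if G admits an independent set of size k. -/
open Classical

/-- The 3-root digraph associated to `G` with 3-edge-coloring `c`. -/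
def ThreeRootDigraph {V : Type*} (G : SimpleGraph V) (c : G.edgeSet → Fin 3) :
    (Fin 3 ⊕ (G.edgeSet ⊕ V)) → (Fin 3 ⊕ (G.edgeSet ⊕ V)) → Prop
  | Sum.inl i, Sum.inr (Sum.inl e) => c e = i
  | Sum.inr (Sum.inl e), Sum.inr (Sum.inr v) => v ∈ (e : Sym2 V)
  | _, _ => False

/-- `c` is a proper 3-edge-coloring. -/
def ProperEdgeColoring {V : Type*} (G : SimpleGraph V) (c : G.edgeSet → Fin 3) : Prop :=
  ∀ e f : G.edgeSet, e ≠ f → (∃ v : V, v ∈ (e : Sym2 V) ∧ v ∈ (f : Sym2 V)) → c e ≠ c f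

/-- `G` is cubic: every vertex has exactly 3 neighbors. -/
def IsCubic {V : Type*} [Fintype V] (G : SimpleGraph V) : Prop :=
  ∀ v : V, (Finset.univ.filter (fun w => G.Adj v w)).card = 3

/-- The failure number of a node `u` with respect to a placement `P ⊆ V`. -/
noncomputable def failureNumber {V : Type*} [DecidableEq V] (G : SimpleGraph V)
    (c : G.edgeSet → Fin 3) (P : Finset V) (u : Fin 3 ⊕ (G.edgeSet ⊕ V)) : ℕ :=
  (P.filter (fun x =>
    Relation.ReflTransGen (ThreeRootDigraph G c) u (Sum.inr (Sum.inr x)))).card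

/-!
If two vertices of a placement `P` are adjacent, the edge-node joining them has failure number
`2`, so the second condition rules it out when `k > 2`; when `k = 2` it joins the three roots
(which reach every vertex, since in a properly 3-edge-coloured cubic graph every vertex meets an
edge of each colour) as a fourth node of failure number `k`. Conversely, for an independent
placement every edge-node and vertex-node has failure number at most `1`, so only the three
roots reach failure number `k`.
-/

namespace ThreeRootDigraph

variable {V : Type*} {G : SimpleGraph V} {c : G.edgeSet → Fin 3}

theorem reflTransGen_vertex_iff {v : V} {u : Fin 3 ⊕ (G.edgeSet ⊕ V)} :
    Relation.ReflTransGen (ThreeRootDigraph G c) (Sum.inr (Sum.inr v)) u ↔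
      u = Sum.inr (Sum.inr v) := by
  rw [Relation.ReflTransGen.cases_head_iff]
  constructor
  · rintro (h | ⟨(_ | _ | _), hvw, _⟩)
    exacts [h.symm, hvw.elim, hvw.elim, hvw.elim]
  · exact fun h => Or.inl h.symm

theorem reflTransGen_edge_vertex_iff {e : G.edgeSet} {x : V} :
    Relation.ReflTransGen (ThreeRootDigraph G c) (Sum.inr (Sum.inl e)) (Sum.inr (Sum.inr x)) ↔
      x ∈ (e : Sym2 V) := by
  rw [Relation.ReflTransGen.cases_head_iff]
  constructor
  · rintro (h | ⟨(_ | _ | w), hew, hwx⟩)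
    · cases h
    · exact hew.elim
    · exact hew.elim
    · obtain rfl : x = w := by simpa using reflTransGen_vertex_iff.1 hwx
      exact hew
  · exact fun hx => Or.inr ⟨Sum.inr (Sum.inr x), hx, Relation.ReflTransGen.refl⟩

theorem reflTransGen_root_vertex_iff {i : Fin 3} {x : V} :
    Relation.ReflTransGen (ThreeRootDigraph G c) (Sum.inl i) (Sum.inr (Sum.inr x)) ↔
      ∃ e : G.edgeSet, c e = i ∧ x ∈ (e : Sym2 V) := by
  rw [Relation.ReflTransGen.cases_head_iff]
  constructor
  · rintro (h | ⟨(_ | e | _), hie, hex⟩)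
    · cases h
    · exact hie.elim
    · exact ⟨e, hie, reflTransGen_edge_vertex_iff.1 hex⟩
    · exact hie.elim
  · rintro ⟨e, hie, hex⟩
    exact Or.inr ⟨Sum.inr (Sum.inl e), hie, reflTransGen_edge_vertex_iff.2 hex⟩

end ThreeRootDigraph

theorem IsCubic.exists_edge_color {V : Type*} [Fintype V] {G : SimpleGraph V}
    {c : G.edgeSet → Fin 3} (hcubic : IsCubic G) (hproper : ProperEdgeColoring G c) (v : V)
    (i : Fin 3) : ∃ e : G.edgeSet, c e = i ∧ v ∈ (e : Sym2 V) := by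
  let edgeTo (w : V) (hw : w ∈ Finset.univ.filter (G.Adj v)) : G.edgeSet :=
    ⟨s(v, w), (Finset.mem_filter.1 hw).2⟩
  -- The three edges at `v` receive distinct colours, hence all three colours.
  have hinj : ∀ w₁ w₂ hw₁ hw₂, c (edgeTo w₁ hw₁) = c (edgeTo w₂ hw₂) → w₁ = w₂ := by
    intro w₁ w₂ hw₁ hw₂ hcol
    by_contra hne
    refine hproper _ _ (fun h => hne ?_) ⟨v, Sym2.mem_mk_left _ _, Sym2.mem_mk_left _ _⟩ hcol
    exact Sym2.congr_right.1 (congrArg Subtype.val h)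
  obtain ⟨w, hw, hi⟩ := Finset.surj_on_of_inj_on_of_card_le (fun w hw => c (edgeTo w hw))
    (fun _ _ => Finset.mem_univ _) hinj (by simp [hcubic v]) i (Finset.mem_univ i)
  exact ⟨edgeTo w hw, hi.symm, Sym2.mem_mk_left _ _⟩

section FailureNumber

variable {V : Type*} [DecidableEq V] {G : SimpleGraph V} {c : G.edgeSet → Fin 3} {P : Finset V}

theorem failureNumber_root [Fintype V] (hcubic : IsCubic G) (hproper : ProperEdgeColoring G c)
    (P : Finset V) (i : Fin 3) : failureNumber G c P (Sum.inl i) = P.card := by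
  rw [failureNumber, Finset.filter_true_of_mem]
  exact fun x _ => ThreeRootDigraph.reflTransGen_root_vertex_iff.2
    (hcubic.exists_edge_color hproper x i)

theorem failureNumber_edge (e : G.edgeSet) :
    failureNumber G c P (Sum.inr (Sum.inl e)) = (P.filter (· ∈ (e : Sym2 V))).card := by
  simp only [failureNumber, ThreeRootDigraph.reflTransGen_edge_vertex_iff]

theorem failureNumber_vertex_le_one (v : V) :
    failureNumber G c P (Sum.inr (Sum.inr v)) ≤ 1 := by
  refine Finset.card_le_one.2 fun x hx y hy => ?_
  simp only [Finset.mem_filter, ThreeRootDigraph.reflTransGen_vertex_iff, Sum.inr.injEq] at hx hy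
  rw [hx.2, hy.2]

theorem failureNumber_edge_of_adj {a b : V} (ha : a ∈ P) (hb : b ∈ P) (hab : G.Adj a b) :
    failureNumber G c P (Sum.inr (Sum.inl ⟨s(a, b), hab⟩)) = 2 := by
  rw [failureNumber_edge, Finset.card_eq_two]
  refine ⟨a, b, hab.ne, Finset.ext fun x => ?_⟩
  simp only [Finset.mem_filter, Sym2.mem_iff, Finset.mem_insert, Finset.mem_singleton]
  constructor
  · exact And.right
  · rintro (rfl | rfl) <;> simp [*]

theorem failureNumber_inr_le_one_of_independent (hP : ∀ v ∈ P, ∀ w ∈ P, ¬ G.Adj v w)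
    (x : G.edgeSet ⊕ V) : failureNumber G c P (Sum.inr x) ≤ 1 := by
  rcases x with e | v
  · rw [failureNumber_edge]
    refine Finset.card_le_one.2 fun x hx y hy => ?_
    rw [Finset.mem_filter] at hx hy
    by_contra hne
    have he : (e : Sym2 V) = s(x, y) := (Sym2.mem_and_mem_iff hne).1 ⟨hx.2, hy.2⟩
    exact hP x hx.1 y hy.1 (he ▸ e.2 : s(x, y) ∈ G.edgeSet)
  · exact failureNumber_vertex_le_one v

end FailureNumber

/-- For `k ≥ 2`, there is a placement `P ⊆ V` of size `k` such that at
most 3 nodes of the 3-root digraph have failure number `k` and no node has failure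
number strictly between 1 and `k`, iff `G` admits an independent set of size `k`. -/
theorem placement_iff_independent_set {V : Type*} [Fintype V] [DecidableEq V]
    (G : SimpleGraph V) (c : G.edgeSet → Fin 3)
    (hcubic : IsCubic G) (hproper : ProperEdgeColoring G c) (k : ℕ) (hk : 2 ≤ k) :
    (∃ P : Finset V, P.card = k ∧
      (Finset.univ.filter
        (fun u : Fin 3 ⊕ (G.edgeSet ⊕ V) => failureNumber G c P u = k)).card ≤ 3 ∧
      ∀ u : Fin 3 ⊕ (G.edgeSet ⊕ V),
        ¬ (1 < failureNumber G c P u ∧ failureNumber G c P u < k)) ↔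
    (∃ I : Finset V, I.card = k ∧ ∀ v ∈ I, ∀ w ∈ I, ¬ G.Adj v w) := by
  have hroot (P : Finset V) (i : Fin 3) := failureNumber_root hcubic hproper P i
  let roots := (Finset.univ : Finset (Fin 3)).map (Function.Embedding.inl (β := G.edgeSet ⊕ V))
  constructor
  · rintro ⟨P, hPk, hcount, hgap⟩
    refine ⟨P, hPk, fun a ha b hb hab => ?_⟩
    let edge : Fin 3 ⊕ (G.edgeSet ⊕ V) := Sum.inr (Sum.inl ⟨s(a, b), hab⟩)
    have hedge : failureNumber G c P edge = 2 := failureNumber_edge_of_adj ha hb hab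
    obtain rfl | hk2 := hk.eq_or_lt
    · have hsub : roots.cons edge (by simp [roots, edge]) ⊆
          Finset.univ.filter (fun u => failureNumber G c P u = 2) := by
        simp [Finset.subset_iff, roots, hedge, hroot, hPk]
      simpa [roots] using (Finset.card_le_card hsub).trans hcount
    · exact hgap edge ⟨by omega, by omega⟩
  · rintro ⟨I, hIk, hI⟩
    have hinr := failureNumber_inr_le_one_of_independent (c := c) hI
    refine ⟨I, hIk, ?_, ?_⟩
    · calc _ ≤ roots.card := Finset.card_le_card fun u hu => by
            rcases u with i | x
            · simp [roots]
            · have := hinr x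
              simp only [Finset.mem_filter] at hu
              omega
        _ = 3 := by simp [roots]
    · rintro (i | x) ⟨h1, h2⟩
      · rw [hroot, hIk] at h2
        exact h2.false
      · have := hinr x
        omega
end
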